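/- Let X be a doubling metric space and Φ a dimension function for which there is a constant c > 0 with Φ(x) ≤ c/|log x| for all x ∈ (0,1). Then for every E ⊆ X, the lower Φ-dimension of E equals the lower Assouad dimension dim_L E, and the upper Φ-dimension of E equals the Assouad dimension dim_A E. -/
import Mathlib


open Set Metric Filter Topology
open scoped ENNReal

noncomputable section

/-- The least number of closed balls of radius `r` needed to cover `E`
(`∞` if there is no finite cover). -/
def coverNumber {X : Type*} [PseudoMetricSpace X] (r : ℝ) (E : Set X) : ℝ≥0∞ :=
  ⨅ (s : Finset X) (_ : E ⊆ ⋃ x ∈ s, closedBall x r), (s.card : ℝ≥0∞)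

/-- `Φ : (0,1) → [0,∞)` is a dimension function if `x ^ (1 + Φ x)` decreases to `0`
as `x` decreases to `0`. -/
def IsDimensionFunction (Φ : ℝ → ℝ) : Prop :=
  (∀ x ∈ Ioo (0:ℝ) 1, 0 ≤ Φ x) ∧
  (∀ x ∈ Ioo (0:ℝ) 1, ∀ y ∈ Ioo (0:ℝ) 1, x ≤ y → x ^ (1 + Φ x) ≤ y ^ (1 + Φ y)) ∧
  Tendsto (fun x : ℝ => x ^ (1 + Φ x)) (nhdsWithin 0 (Ioo 0 1)) (nhds 0)

/-- A metric space is doubling if there is `M ≥ 1` such that every closed ball of radius `R`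
can be covered by at most `M` closed balls of radius `R / 2`. -/
def IsDoublingSpace (X : Type*) [PseudoMetricSpace X] : Prop :=
  ∃ M : ℕ, 1 ≤ M ∧ ∀ (x : X) (R : ℝ), ∃ s : Finset X, s.card ≤ M ∧
    closedBall x R ⊆ ⋃ y ∈ s, closedBall y (R / 2)

/-- The upper `Φ`-dimension. -/
def upperPhiDim {X : Type*} [PseudoMetricSpace X] (Φ : ℝ → ℝ) (E : Set X) : ℝ :=
  sInf {α : ℝ | ∃ c₁ > (0:ℝ), ∃ c₂ > (0:ℝ), ∀ r R : ℝ,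
    0 < r → r ≤ R ^ (1 + Φ R) → R ^ (1 + Φ R) ≤ R → R < c₁ → ∀ z ∈ E,
      coverNumber r (closedBall z R ∩ E) ≤ ENNReal.ofReal (c₂ * (R / r) ^ α)}

/-- The lower `Φ`-dimension. -/
def lowerPhiDim {X : Type*} [PseudoMetricSpace X] (Φ : ℝ → ℝ) (E : Set X) : ℝ :=
  sSup {α : ℝ | ∃ c₁ > (0:ℝ), ∃ c₂ > (0:ℝ), ∀ r R : ℝ,
    0 < r → r ≤ R ^ (1 + Φ R) → R ^ (1 + Φ R) ≤ R → R < c₁ → ∀ z ∈ E,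
      ENNReal.ofReal (c₂ * (R / r) ^ α) ≤ coverNumber r (closedBall z R ∩ E)}

/-- The (upper) Assouad dimension: the upper `Φ`-dimension with `Φ ≡ 0`. -/
def assouadDim {X : Type*} [PseudoMetricSpace X] (E : Set X) : ℝ :=
  upperPhiDim (fun _ => 0) E

/-- The lower Assouad dimension: the lower `Φ`-dimension with `Φ ≡ 0`. -/
def lowerAssouadDim {X : Type*} [PseudoMetricSpace X] (E : Set X) : ℝ :=
  lowerPhiDim (fun _ => 0) E

/-- The upper `θ`-Assouad spectrum: the upper `Φ`-dimension with constant `Φ = 1/θ - 1`. -/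
def upperAssouadSpectrum {X : Type*} [PseudoMetricSpace X] (θ : ℝ) (E : Set X) : ℝ :=
  upperPhiDim (fun _ => 1 / θ - 1) E

/-- The lower `θ`-Assouad spectrum: the lower `Φ`-dimension with constant `Φ = 1/θ - 1`. -/
def lowerAssouadSpectrum {X : Type*} [PseudoMetricSpace X] (θ : ℝ) (E : Set X) : ℝ :=
  lowerPhiDim (fun _ => 1 / θ - 1) E

/-- The upper quasi-Assouad dimension, `lim_{θ → 1}` of the upper `θ`-Assouad spectrum;
since the upper spectrum is nondecreasing in `θ`, this limit is the supremum over
`θ ∈ (0,1)`. -/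
def quasiAssouadDim {X : Type*} [PseudoMetricSpace X] (E : Set X) : ℝ :=
  ⨆ θ : Ioo (0:ℝ) 1, upperAssouadSpectrum (θ : ℝ) E

/-- The lower quasi-Assouad dimension, `lim_{θ → 1}` of the lower `θ`-Assouad spectrum;
since the lower spectrum is nonincreasing in `θ`, this limit is the infimum over
`θ ∈ (0,1)`. -/
def quasiLowerAssouadDim {X : Type*} [PseudoMetricSpace X] (E : Set X) : ℝ :=
  ⨅ θ : Ioo (0:ℝ) 1, lowerAssouadSpectrum (θ : ℝ) E

/-- Upper box dimension `limsup_{r → 0} log N_r(E) / |log r|`. -/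
def upperBoxDim {X : Type*} [PseudoMetricSpace X] (E : Set X) : ℝ :=
  limsup (fun r : ℝ => Real.log (coverNumber r E).toReal / |Real.log r|)
    (nhdsWithin 0 (Ioo 0 1))

/-- Lower box dimension `liminf_{r → 0} log N_r(E) / |log r|`. -/
def lowerBoxDim {X : Type*} [PseudoMetricSpace X] (E : Set X) : ℝ :=
  liminf (fun r : ℝ => Real.log (coverNumber r E).toReal / |Real.log r|)
    (nhdsWithin 0 (Ioo 0 1))


-- aux lemmas
lemma coverNumber_le_card' {X : Type*} [PseudoMetricSpace X] {r : ℝ} {E : Set X}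
    {s : Finset X} (h : E ⊆ ⋃ x ∈ s, closedBall x r) :
    coverNumber r E ≤ s.card :=
  iInf_le_of_le s (iInf_le _ h)

lemma one_le_coverNumber' {X : Type*} [PseudoMetricSpace X] {r : ℝ} {E : Set X}
    (h : E.Nonempty) : 1 ≤ coverNumber r E := by
  refine le_iInf fun s => le_iInf fun hs => ?_
  obtain ⟨z, hz⟩ := h
  have hz' := hs hz
  simp only [Set.mem_iUnion, exists_prop] at hz'
  obtain ⟨y, hy, -⟩ := hz'
  exact_mod_cast Nat.one_le_cast.mpr (Finset.card_pos.mpr ⟨y, hy⟩)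

lemma doubling_iterate {X : Type*} [PseudoMetricSpace X] {M : ℕ}
    (hM : ∀ (x : X) (R : ℝ), ∃ s : Finset X, s.card ≤ M ∧
      closedBall x R ⊆ ⋃ y ∈ s, closedBall y (R / 2)) :
    ∀ (k : ℕ) (x : X) (R : ℝ), ∃ s : Finset X, s.card ≤ M ^ k ∧
      closedBall x R ⊆ ⋃ y ∈ s, closedBall y (R / 2 ^ k) := by
  classical
  intro k
  induction k with
  | zero => intro x R; exact ⟨{x}, by simp, by simp⟩
  | succ k ih =>
    intro x R
    obtain ⟨s, hcard, hcov⟩ := ih x R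
    choose f hf1 hf2 using fun y : X => hM y (R / 2 ^ k)
    refine ⟨s.biUnion f, ?_, ?_⟩
    · calc (s.biUnion f).card ≤ ∑ y ∈ s, (f y).card := Finset.card_biUnion_le
        _ ≤ ∑ _y ∈ s, M := Finset.sum_le_sum fun y _ => hf1 y
        _ = s.card * M := by simp [Finset.sum_const, mul_comm]
        _ ≤ M ^ k * M := Nat.mul_le_mul_right _ hcard
        _ = M ^ (k + 1) := by ring
    · intro z hz
      have h1 := hcov hz
      simp only [Set.mem_iUnion, exists_prop] at h1 ⊢
      obtain ⟨y, hys, hzy⟩ := h1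
      have h2 := hf2 y hzy
      simp only [Set.mem_iUnion, exists_prop] at h2
      obtain ⟨w, hw, hzw⟩ := h2
      refine ⟨w, Finset.mem_biUnion.mpr ⟨y, hys, hw⟩, ?_⟩
      have : R / 2 ^ k / 2 = R / 2 ^ (k + 1) := by ring
      rwa [this] at hzw

/-- If `Φ x ≤ c / |log x|`, then the `Φ`-dimensions are the Assouad dimensions. -/
theorem phiDim_eq_assouad_of_le_div_log {X : Type*} [MetricSpace X]
    (hX : IsDoublingSpace X) (Φ : ℝ → ℝ) (hΦ : IsDimensionFunction Φ)
    (c : ℝ) (hc : 0 < c) (hle : ∀ x ∈ Ioo (0:ℝ) 1, Φ x ≤ c / |Real.log x|)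
    (E : Set X) :
    lowerPhiDim Φ E = lowerAssouadDim E ∧ upperPhiDim Φ E = assouadDim E := by
  obtain ⟨M, hM1, hMd⟩ := hX
  set k₀ : ℕ := ⌈c / Real.log 2⌉₊ with hk₀
  have h2pos : (0:ℝ) < Real.log 2 := Real.log_pos one_lt_two
  have hexp2 : Real.exp c ≤ (2:ℝ) ^ k₀ := by
    have h1 : c / Real.log 2 ≤ (k₀ : ℝ) := Nat.le_ceil _
    have hck : c ≤ Real.log 2 * (k₀ : ℝ) := by
      rw [div_le_iff₀ h2pos] at h1; linarith
    calc Real.exp c ≤ Real.exp (Real.log 2 * (k₀ : ℝ)) := Real.exp_le_exp.mpr hck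
      _ = (2:ℝ) ^ (k₀ : ℝ) := by rw [Real.exp_mul, Real.exp_log two_pos]
      _ = (2:ℝ) ^ k₀ := Real.rpow_natCast 2 k₀
  -- covering bound
  have hcover : ∀ (z : X) (r R : ℝ), 0 < r → R ≤ r * 2 ^ k₀ →
      coverNumber r (closedBall z R ∩ E) ≤ ((M ^ k₀ : ℕ) : ℝ≥0∞) := by
    intro z r R hr hRr
    obtain ⟨s, hcard, hcov⟩ := doubling_iterate hMd k₀ z R
    have hsub : closedBall z R ∩ E ⊆ ⋃ y ∈ s, closedBall y r := by
      refine Set.inter_subset_left.trans (hcov.trans ?_)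
      refine Set.iUnion₂_mono fun y _ => closedBall_subset_closedBall ?_
      rw [div_le_iff₀ (by positivity)]
      linarith
    exact (coverNumber_le_card' hsub).trans (by exact_mod_cast hcard)
  -- ratio bound
  have hratio : ∀ r R : ℝ, 0 < r → r ≤ R → R < 1 → R ^ (1 + Φ R) < r →
      R / r ≤ Real.exp c := by
    intro r R hr hrR hR1 hcase
    have hR0 : 0 < R := lt_of_lt_of_le hr hrR
    have hlog : Real.log R < 0 := Real.log_neg hR0 hR1
    have hφ := hle R ⟨hR0, hR1⟩
    rw [abs_of_neg hlog] at hφ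
    have h1 : Φ R * (-Real.log R) ≤ c := (le_div_iff₀ (by linarith)).mp hφ
    have h3 : Real.exp (-c) ≤ R ^ (Φ R) := by
      rw [Real.rpow_def_of_pos hR0]
      exact Real.exp_le_exp.mpr (by nlinarith)
    have h4 : R * Real.exp (-c) ≤ R ^ (1 + Φ R) := by
      rw [Real.rpow_add hR0, Real.rpow_one]
      exact mul_le_mul_of_nonneg_left h3 hR0.le
    have h5 : R * Real.exp (-c) < r := lt_of_le_of_lt h4 hcase
    have hec : Real.exp (-c) * Real.exp c = 1 := by
      rw [← Real.exp_add]; simp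
    rw [div_le_iff₀ hr]
    calc R = R * Real.exp (-c) * Real.exp c := by rw [mul_assoc, hec, mul_one]
      _ ≤ r * Real.exp c := mul_le_mul_of_nonneg_right h5.le (Real.exp_pos c).le
      _ = Real.exp c * r := mul_comm _ _
  -- rpow bounds
  have hpow : ∀ (α t : ℝ), 1 ≤ t → t ≤ Real.exp c →
      Real.exp (-(c * |α|)) ≤ t ^ α ∧ t ^ α ≤ Real.exp (c * |α|) := by
    intro α t ht1 htc
    have ht0 : (0:ℝ) < t := lt_of_lt_of_le one_pos ht1
    have hub : t ^ |α| ≤ Real.exp (c * |α|) := by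
      calc t ^ |α| ≤ (Real.exp c) ^ |α| := Real.rpow_le_rpow ht0.le htc (abs_nonneg α)
        _ = Real.exp (c * |α|) := (Real.exp_mul c |α|).symm
    refine ⟨?_, ?_⟩
    · calc Real.exp (-(c * |α|)) = (Real.exp (c * |α|))⁻¹ := Real.exp_neg _
        _ ≤ (t ^ |α|)⁻¹ := inv_anti₀ (Real.rpow_pos_of_pos ht0 _) hub
        _ = t ^ (-|α|) := (Real.rpow_neg ht0.le _).symm
        _ ≤ t ^ α := Real.rpow_le_rpow_of_exponent_le ht1 (neg_abs_le α)
    · calc t ^ α ≤ t ^ |α| := Real.rpow_le_rpow_of_exponent_le ht1 (le_abs_self α)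
        _ ≤ Real.exp (c * |α|) := hub
  have hMk : (0:ℝ) < (M : ℝ) ^ k₀ := by positivity
  constructor
  · -- lower
    have hset : {α : ℝ | ∃ c₁ > (0:ℝ), ∃ c₂ > (0:ℝ), ∀ r R : ℝ,
        0 < r → r ≤ R ^ (1 + Φ R) → R ^ (1 + Φ R) ≤ R → R < c₁ → ∀ z ∈ E,
          ENNReal.ofReal (c₂ * (R / r) ^ α) ≤ coverNumber r (closedBall z R ∩ E)}
        = {α : ℝ | ∃ c₁ > (0:ℝ), ∃ c₂ > (0:ℝ), ∀ r R : ℝ,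
        0 < r → r ≤ R ^ (1 + (0:ℝ)) → R ^ (1 + (0:ℝ)) ≤ R → R < c₁ → ∀ z ∈ E,
          ENNReal.ofReal (c₂ * (R / r) ^ α) ≤ coverNumber r (closedBall z R ∩ E)} := by
      ext α
      simp only [Set.mem_setOf_eq]
      constructor
      · rintro ⟨c₁, hc₁, c₂, hc₂, H⟩
        refine ⟨min c₁ 1, lt_min hc₁ one_pos,
          min c₂ (Real.exp (-(c * |α|))), lt_min hc₂ (Real.exp_pos _), ?_⟩
        intro r R hr h1 _ hR z hz
        rw [add_zero, Real.rpow_one] at h1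
        have hRc₁ : R < c₁ := lt_of_lt_of_le hR (min_le_left _ _)
        have hR1 : R < 1 := lt_of_lt_of_le hR (min_le_right _ _)
        have hR0 : 0 < R := lt_of_lt_of_le hr h1
        have hRr1 : (1:ℝ) ≤ R / r := (one_le_div hr).mpr h1
        have hxnn : (0:ℝ) ≤ (R / r) ^ α := Real.rpow_nonneg (by positivity) α
        by_cases hcase : r ≤ R ^ (1 + Φ R)
        · have hΦR : 0 ≤ Φ R := hΦ.1 R ⟨hR0, hR1⟩
          have h2 : R ^ (1 + Φ R) ≤ R := by
            calc R ^ (1 + Φ R) ≤ R ^ (1:ℝ) :=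
                Real.rpow_le_rpow_of_exponent_ge hR0 hR1.le (by linarith)
              _ = R := Real.rpow_one R
          refine le_trans (ENNReal.ofReal_le_ofReal ?_) (H r R hr hcase h2 hRc₁ z hz)
          exact mul_le_mul_of_nonneg_right (min_le_left _ _) hxnn
        · push_neg at hcase
          have hrat := hratio r R hr h1 hR1 hcase
          have hub := (hpow α (R / r) hRr1 hrat).2
          have hone : min c₂ (Real.exp (-(c * |α|))) * (R / r) ^ α ≤ 1 := by
            calc min c₂ (Real.exp (-(c * |α|))) * (R / r) ^ α
                ≤ Real.exp (-(c * |α|)) * Real.exp (c * |α|) :=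
                  mul_le_mul (min_le_right _ _) hub hxnn (Real.exp_pos _).le
              _ = 1 := by rw [← Real.exp_add]; simp
          refine le_trans (ENNReal.ofReal_le_one.mpr hone) (one_le_coverNumber' ?_)
          exact ⟨z, mem_closedBall_self hR0.le, hz⟩
      · rintro ⟨c₁, hc₁, c₂, hc₂, H⟩
        refine ⟨c₁, hc₁, c₂, hc₂, ?_⟩
        intro r R hr h1 h2 hR z hz
        refine H r R hr ?_ ?_ hR z hz
        · rw [add_zero, Real.rpow_one]; exact h1.trans h2
        · rw [add_zero, Real.rpow_one]
    exact congrArg sSup hset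
  · -- upper
    have hset : {α : ℝ | ∃ c₁ > (0:ℝ), ∃ c₂ > (0:ℝ), ∀ r R : ℝ,
        0 < r → r ≤ R ^ (1 + Φ R) → R ^ (1 + Φ R) ≤ R → R < c₁ → ∀ z ∈ E,
          coverNumber r (closedBall z R ∩ E) ≤ ENNReal.ofReal (c₂ * (R / r) ^ α)}
        = {α : ℝ | ∃ c₁ > (0:ℝ), ∃ c₂ > (0:ℝ), ∀ r R : ℝ,
        0 < r → r ≤ R ^ (1 + (0:ℝ)) → R ^ (1 + (0:ℝ)) ≤ R → R < c₁ → ∀ z ∈ E,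
          coverNumber r (closedBall z R ∩ E) ≤ ENNReal.ofReal (c₂ * (R / r) ^ α)} := by
      ext α
      simp only [Set.mem_setOf_eq]
      constructor
      · rintro ⟨c₁, hc₁, c₂, hc₂, H⟩
        refine ⟨min c₁ 1, lt_min hc₁ one_pos,
          c₂ + (M : ℝ) ^ k₀ * Real.exp (c * |α|), by positivity, ?_⟩
        intro r R hr h1 _ hR z hz
        rw [add_zero, Real.rpow_one] at h1
        have hRc₁ : R < c₁ := lt_of_lt_of_le hR (min_le_left _ _)
        have hR1 : R < 1 := lt_of_lt_of_le hR (min_le_right _ _)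
        have hR0 : 0 < R := lt_of_lt_of_le hr h1
        have hRr1 : (1:ℝ) ≤ R / r := (one_le_div hr).mpr h1
        have hxnn : (0:ℝ) ≤ (R / r) ^ α := Real.rpow_nonneg (by positivity) α
        by_cases hcase : r ≤ R ^ (1 + Φ R)
        · have hΦR : 0 ≤ Φ R := hΦ.1 R ⟨hR0, hR1⟩
          have h2 : R ^ (1 + Φ R) ≤ R := by
            calc R ^ (1 + Φ R) ≤ R ^ (1:ℝ) :=
                Real.rpow_le_rpow_of_exponent_ge hR0 hR1.le (by linarith)
              _ = R := Real.rpow_one R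
          refine le_trans (H r R hr hcase h2 hRc₁ z hz) (ENNReal.ofReal_le_ofReal ?_)
          refine mul_le_mul_of_nonneg_right ?_ hxnn
          exact le_add_of_nonneg_right (by positivity)
        · push_neg at hcase
          have hrat := hratio r R hr h1 hR1 hcase
          have hlb := (hpow α (R / r) hRr1 hrat).1
          have hRle : R ≤ r * 2 ^ k₀ := by
            have h3 : R / r ≤ (2:ℝ) ^ k₀ := hrat.trans hexp2
            rw [div_le_iff₀ hr] at h3
            linarith
          refine le_trans (hcover z r R hr hRle) ?_
          rw [← ENNReal.ofReal_natCast]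
          refine ENNReal.ofReal_le_ofReal ?_
          push_cast
          calc (M : ℝ) ^ k₀
              = (M : ℝ) ^ k₀ * Real.exp (c * |α|) * Real.exp (-(c * |α|)) := by
                rw [mul_assoc, ← Real.exp_add]; simp
            _ ≤ (M : ℝ) ^ k₀ * Real.exp (c * |α|) * (R / r) ^ α :=
                mul_le_mul_of_nonneg_left hlb (by positivity)
            _ ≤ (c₂ + (M : ℝ) ^ k₀ * Real.exp (c * |α|)) * (R / r) ^ α :=
                mul_le_mul_of_nonneg_right (le_add_of_nonneg_left hc₂.le) hxnn
      · rintro ⟨c₁, hc₁, c₂, hc₂, H⟩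
        refine ⟨c₁, hc₁, c₂, hc₂, ?_⟩
        intro r R hr h1 h2 hR z hz
        refine H r R hr ?_ ?_ hR z hz
        · rw [add_zero, Real.rpow_one]; exact h1.trans h2
        · rw [add_zero, Real.rpow_one]
    exact congrArg sInf hset


end
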